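/- arXiv:2201.08764 — 2 statements merged into one kernel-verified Lean document; each statement's English description precedes it below -/
import Mathlib

section
/- Let V be a K-module with rank(V) ≥ 3 and let f, f' be semilinear automorphisms of V such that f⟨v⟩ = f'⟨v⟩ for every v ∈ V (where ⟨v⟩ is the cyclic submodule generated by v). Then there exists a nonzero scalar α ∈ K* independent of v such that f'(v) = α·f(v) for all v ∈ V. -/
/-!
Write `h = f' ∘ f⁻¹`. Since `f` is semilinear it maps `⟨v⟩` into `⟨f v⟩`, so the hypothesis makes
`h` an additive map sending every vector `w` to a multiple `c w • w` of itself. For linearly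
independent `u, w`, comparing `h (u + w) = h u + h w` coefficientwise gives `c u = c w`. In rank at
least two, two dependent nonzero vectors have a common independent partner, so `c` is a constant `α`
on nonzero vectors and `f' = α • f`; injectivity of `f'` forces `α ≠ 0`.
-/

lemma LinearIndependent.eq_of_smul_add_smul_eq_smul_add {R M : Type*} [Ring R] [AddCommGroup M]
    [Module R M] {u w : M} (huw : LinearIndependent R ![u, w]) {a b d : R}
    (h : a • u + b • w = d • (u + w)) : a = b := by
  have hzero : (a - d) • u + (b - d) • w = 0 := by
    rw [sub_smul, sub_smul, sub_add_sub_comm, h, smul_add, sub_self]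
  obtain ⟨had, hbd⟩ := LinearIndependent.pair_iff.1 huw _ _ hzero
  rw [sub_eq_zero.1 had, sub_eq_zero.1 hbd]

section LineCoefficient

variable {K V : Type*} [DivisionRing K] [AddCommGroup V] [Module K V]
  {h : V →+ V} {c : V → K}

lemma coeff_eq_of_linearIndependent_pair (hc : ∀ v, h v = c v • v) {u w : V}
    (huw : LinearIndependent K ![u, w]) : c u = c w :=
  huw.eq_of_smul_add_smul_eq_smul_add (d := c (u + w)) (by rw [← hc, ← hc, ← hc, map_add])

lemma coeff_eq_of_ne_zero (hV : 1 < Module.rank K V) (hc : ∀ v, h v = c v • v) {u v : V}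
    (hu : u ≠ 0) (hv : v ≠ 0) : c u = c v := by
  by_cases huv : LinearIndependent K ![u, v]
  · exact coeff_eq_of_linearIndependent_pair hc huv
  obtain ⟨t, rfl⟩ : ∃ t : K, t • u = v := by
    simpa [LinearIndependent.pair_iff' hu] using huv
  obtain ⟨w, huw⟩ := exists_linearIndependent_pair_of_one_lt_rank hV hu
  have hvw : LinearIndependent K ![t • u, w] :=
    (LinearIndependent.pair_iff' hv).2 fun a haw =>
      (LinearIndependent.pair_iff' hu).1 huw (a * t) (by rw [mul_smul, haw])
  rw [coeff_eq_of_linearIndependent_pair hc huw, coeff_eq_of_linearIndependent_pair hc hvw]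

end LineCoefficient

theorem AddMonoidHom.exists_eq_smul_of_forall_mem_span_singleton {K V : Type*} [DivisionRing K]
    [AddCommGroup V] [Module K V] (hV : 1 < Module.rank K V) (h : V →+ V)
    (hh : ∀ v, h v ∈ K ∙ v) : ∃ α : K, ∀ v, h v = α • v := by
  choose c hc using fun v => Submodule.mem_span_singleton.1 (hh v)
  obtain ⟨u, hu⟩ := rank_pos_iff_exists_ne_zero.1 (zero_lt_one.trans hV)
  refine ⟨c u, fun v => ?_⟩
  rcases eq_or_ne v 0 with rfl | hv
  · simp
  · rw [← hc, coeff_eq_of_ne_zero hV (fun v => (hc v).symm) hu hv]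

lemma image_span_singleton_subset_of_map_smul {K V : Type*} [DivisionRing K] [AddCommGroup V]
    [Module K V] {f : V → V} {θ : K → K} (hf : ∀ (a : K) (v : V), f (a • v) = θ a • f v) (v : V) :
    f '' (K ∙ v) ⊆ K ∙ f v := by
  rintro _ ⟨_, hx, rfl⟩
  obtain ⟨a, rfl⟩ := Submodule.mem_span_singleton.1 hx
  rw [hf]
  exact Submodule.smul_mem _ _ (Submodule.mem_span_singleton_self _)

theorem semilinear_autos_equal_on_cyclic_submodules_general
    (K V : Type*) [DivisionRing K] [AddCommGroup V] [Module K V]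
    (hrank : 3 ≤ Module.rank K V)
    (f f' : V ≃+ V)
    (hf : ∃ θ : K ≃+* K, ∀ (a : K) (v : V), f (a • v) = θ a • f v)
    (hspan : ∀ v : V,
      (f) '' ((Submodule.span K {v} : Submodule K V) : Set V) =
      (f') '' ((Submodule.span K {v} : Submodule K V) : Set V)) :
    ∃ α : Kˣ, ∀ v : V, f' v = (α : K) • f v := by
  obtain ⟨θ, hθ⟩ := hf
  have hV : 1 < Module.rank K V := lt_of_lt_of_le (by norm_num) hrank
  have hline : ∀ w, (f.symm.trans f') w ∈ K ∙ w := fun w => by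
    simpa using image_span_singleton_subset_of_map_smul hθ (f.symm w)
      (hspan (f.symm w) ▸ Set.mem_image_of_mem f' (Submodule.mem_span_singleton_self _))
  obtain ⟨α, hα⟩ :=
    (f.symm.trans f').toAddMonoidHom.exists_eq_smul_of_forall_mem_span_singleton hV hline
  have hα0 : α ≠ 0 := by
    rintro rfl
    obtain ⟨u, hu⟩ := rank_pos_iff_exists_ne_zero.1 (zero_lt_one.trans hV)
    exact hu (by simpa using hα u)
  exact ⟨Units.mk0 α hα0, fun v => by simpa using hα (f v)⟩

/-- Let `V` be a module over a division ring `K` of rank at least 3, and let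
`f`, `f'` be semilinear automorphisms of `V` which agree on all cyclic
submodules, i.e. `f ⟨v⟩ = f' ⟨v⟩` for every `v`. Then there is a nonzero scalar
`α ∈ K*`, independent of `v`, with `f' v = α • f v` for all `v`. -/
theorem semilinear_autos_equal_on_cyclic_submodules
    (K V : Type*) [DivisionRing K] [AddCommGroup V] [Module K V]
    (hrank : 3 ≤ Module.rank K V)
    (f f' : V ≃+ V)
    (hf : ∃ θ : K ≃+* K, ∀ (a : K) (v : V), f (a • v) = θ a • f v)
    (hf' : ∃ θ' : K ≃+* K, ∀ (a : K) (v : V), f' (a • v) = θ' a • f' v)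
    (hspan : ∀ v : V,
      (f) '' ((Submodule.span K {v} : Submodule K V) : Set V) =
      (f') '' ((Submodule.span K {v} : Submodule K V) : Set V)) :
    ∃ α : Kˣ, ∀ v : V, f' v = (α : K) • f v :=
  semilinear_autos_equal_on_cyclic_submodules_general K V hrank f f' hf hspan
end

section
/- Two semilinear projective representations ρ and ρ̃ of a group G on a K-module V of rank ≥ 3 induce the same G-lattice structure on L(V) (i.e., ρ(g)W = ρ̃(g)W for all g ∈ G and submodules W) if and only if they are equivalent, i.e., there is a map η : G → K* with ρ̃(g) = η(g)·ρ(g) for all g. -/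
/-- Two semilinear projective representations of `G` on a `K`-module `V` of
rank at least 3 induce the same `G`-lattice structure on the submodule lattice
`L(V)` if and only if they are equivalent, i.e. differ by a map `η : G → K*`. -/
theorem same_glattice_iff_equivalent_representations
    (G K V : Type*) [Group G] [DivisionRing K] [AddCommGroup V] [Module K V]
    (hrank : 3 ≤ Module.rank K V)
    (ρ ρ' : G → V ≃+ V)
    (hsemi : ∀ g : G, ∃ θ : K ≃+* K, ∀ (a : K) (v : V), ρ g (a • v) = θ a • ρ g v)
    (hsemi' : ∀ g : G, ∃ θ : K ≃+* K, ∀ (a : K) (v : V), ρ' g (a • v) = θ a • ρ' g v)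
    (hproj : ∀ g h : G, ∃ α : Kˣ, ∀ v : V, ρ g (ρ h v) = (α : K) • ρ (g * h) v)
    (hproj' : ∀ g h : G, ∃ α : Kˣ, ∀ v : V, ρ' g (ρ' h v) = (α : K) • ρ' (g * h) v) :
    (∀ (g : G) (W : Submodule K V),
        (ρ g) '' (W : Set V) = (ρ' g) '' (W : Set V)) ↔
    (∃ η : G → Kˣ, ∀ (g : G) (v : V), ρ' g v = (η g : K) • ρ g v) := by
  -- no singleton spans the whole space
  have hne_top : ∀ v : V, Submodule.span K {v} ≠ ⊤ := by
    intro v h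
    have h1 : Module.rank K (Submodule.span K ({v} : Set V)) ≤ 1 := by
      simpa using rank_span_le (R := K) ({v} : Set V)
    rw [h, rank_top] at h1
    have : (3 : Cardinal) ≤ 1 := le_trans hrank h1
    norm_num at this
  have hexists_out : ∀ v : V, ∃ u : V, u ∉ Submodule.span K {v} := by
    intro v
    by_contra h
    push_neg at h
    exact hne_top v (Submodule.eq_top_iff'.mpr h)
  constructor
  · intro hW
    have key : ∀ g : G, ∃ c : Kˣ, ∀ v : V, ρ' g v = (c : K) • ρ g v := by
      intro g
      obtain ⟨θ, hθ⟩ := hsemi g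
      set σ : V → V := fun v => ρ' g ((ρ g).symm v) with hσdef
      have σ_add : ∀ v w, σ (v + w) = σ v + σ w := by
        intro v w
        simp [hσdef, map_add]
      have hscal : ∀ v : V, ∃ c : K, σ v = c • v := by
        intro v
        have h1 : ρ' g ((ρ g).symm v) ∈ (ρ' g) '' (Submodule.span K {(ρ g).symm v} : Set V) :=
          ⟨_, Submodule.mem_span_singleton_self _, rfl⟩
        rw [← hW g] at h1
        obtain ⟨x, hx, hxe⟩ := h1
        obtain ⟨a, rfl⟩ := Submodule.mem_span_singleton.mp hx
        refine ⟨θ a, ?_⟩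
        rw [hσdef]
        simp only
        rw [← hxe, hθ, (ρ g).apply_symm_apply]
      choose c hc using hscal
      have σ_ne : ∀ v : V, v ≠ 0 → σ v ≠ 0 := by
        intro v hv h
        apply hv
        have h1 : (ρ g).symm v = 0 := (ρ' g).map_eq_zero_iff.mp h
        have := congrArg (ρ g) h1
        rwa [(ρ g).apply_symm_apply, map_zero] at this
      have c_ne : ∀ v : V, v ≠ 0 → c v ≠ 0 := by
        intro v hv hcv
        exact σ_ne v hv (by rw [hc v, hcv, zero_smul])
      -- key independence step
      have indep : ∀ v u : V, v ≠ 0 → u ∉ Submodule.span K {v} → c v = c u := by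
        intro v u hv hu
        have hu0 : u ≠ 0 := fun h => hu (h ▸ Submodule.zero_mem _)
        have h1 : c (v + u) • (v + u) = c v • v + c u • u := by
          rw [← hc, ← hc, ← hc, σ_add]
        rw [smul_add] at h1
        -- first: c (v+u) = c u
        have h2 : c (v + u) = c u := by
          by_contra hne
          apply hu
          have h3 : (c (v + u) - c u) • u = (c v - c (v + u)) • v := by
            rw [sub_smul, sub_smul, sub_eq_sub_iff_add_eq_add,
              add_comm (c (v + u) • u) (c (v + u) • v), h1]
          have hd : c (v + u) - c u ≠ 0 := sub_ne_zero.mpr hne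
          have : u = ((c (v + u) - c u)⁻¹ * (c v - c (v + u))) • v := by
            rw [← smul_smul, ← h3, smul_smul, inv_mul_cancel₀ hd, one_smul]
          rw [this]
          exact Submodule.smul_mem _ _ (Submodule.mem_span_singleton_self v)
        rw [h2] at h1
        have h6 : c u • v = c v • v := add_right_cancel h1
        exact (smul_left_injective K hv h6).symm
      have all_eq : ∀ v w : V, v ≠ 0 → w ≠ 0 → c v = c w := by
        intro v w hv hw
        by_cases hvw : w ∈ Submodule.span K {v}
        · obtain ⟨a, rfl⟩ := Submodule.mem_span_singleton.mp hvw
          have ha : a ≠ 0 := fun h => hw (by rw [h, zero_smul])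
          obtain ⟨u, hu⟩ := hexists_out v
          have hu' : u ∉ Submodule.span K {a • v} := by
            intro h
            obtain ⟨b, hb⟩ := Submodule.mem_span_singleton.mp h
            apply hu
            rw [← hb] at *
            exact Submodule.mem_span_singleton.mpr ⟨b * a, (smul_smul b a v).symm⟩
          rw [indep v u hv hu, indep (a • v) u hw hu']
        · exact indep v w hv hvw
      -- pick a nonzero vector
      obtain ⟨v₀, hv₀⟩ := hexists_out 0
      have hv₀0 : v₀ ≠ 0 := by
        intro h
        exact hv₀ (by rw [h]; exact Submodule.zero_mem _)
      refine ⟨Units.mk0 (c v₀) (c_ne v₀ hv₀0), fun v => ?_⟩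
      have hσv : σ (ρ g v) = ρ' g v := by
        rw [hσdef]
        simp
      by_cases hv : ρ g v = 0
      · have hv' : v = 0 := by
          have := congrArg (ρ g).symm hv
          rwa [(ρ g).symm_apply_apply, map_zero] at this
        rw [hv, hv', map_zero, smul_zero]
      · rw [← hσv, hc (ρ g v), all_eq (ρ g v) v₀ hv hv₀0]
        rfl
    choose η hη using key
    exact ⟨η, fun g v => hη g v⟩
  · rintro ⟨η, hη⟩ g W
    obtain ⟨θ, hθ⟩ := hsemi g
    obtain ⟨θ', hθ'⟩ := hsemi' g
    ext x
    constructor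
    · rintro ⟨w, hw, rfl⟩
      refine ⟨θ'.symm ((η g : K)⁻¹) • w, Submodule.smul_mem _ _ hw, ?_⟩
      rw [hθ', θ'.apply_symm_apply, hη g w, smul_smul,
        inv_mul_cancel₀ (Units.ne_zero (η g)), one_smul]
    · rintro ⟨w, hw, rfl⟩
      refine ⟨θ.symm (η g : K) • w, Submodule.smul_mem _ _ hw, ?_⟩
      rw [hη, hθ, θ.apply_symm_apply]
end
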